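/- arXiv:2604.18299 — 6 statements merged into one kernel-verified Lean document; each statement's English description precedes it below -/
import Mathlib

section
/- If P is a pseudo-substitutable preference profile and every substitutable preference profile admits a pairwise stable allocation, then the market P admits a pairwise stable allocation: S(P) ≠ ∅. -/
variable {X A : Type*} [DecidableEq X] [DecidableEq A]

/-- Contracts in `Y` involving agent `a`. -/
def restrictTo (doc hos : X → A) (a : A) (Y : Finset X) : Finset X :=
  Y.filter (fun c => doc c = a ∨ hos c = a)

def IndRat (doc hos : X → A) (C : A → Finset X → Finset X) (Y : Finset X) : Prop :=
  ∀ a : A, C a Y = restrictTo doc hos a Y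

def Blocks (doc hos : X → A) (C : A → Finset X → Finset X) (Y : Finset X) (x : X) : Prop :=
  x ∉ Y ∧ x ∈ C (doc x) (insert x Y) ∧ x ∈ C (hos x) (insert x Y)

def Stable (doc hos : X → A) (C : A → Finset X → Finset X) (Y : Finset X) : Prop :=
  IndRat doc hos C Y ∧ ∀ x : X, ¬ Blocks doc hos C Y x

/-- Substitutability of a choice function. -/
def Substitutable (C : Finset X → Finset X) : Prop :=
  ∀ (S : Finset X) (x x' : X), x ∈ S → x' ∈ S → x ≠ x' → x' ∈ C S → x' ∈ C (S.erase x)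

/-- `C'` is a sub-preference of `C` for agent `a`. -/
def SubPrefAt (doc hos : X → A) (a : A) (C' C : Finset X → Finset X) : Prop :=
  (∀ S : Finset X, C' S = restrictTo doc hos a S → C S = restrictTo doc hos a S) ∧
  (∀ (S : Finset X) (x : X), C' S = restrictTo doc hos a S → x ∉ S →
      x ∈ C (insert x S) → x ∈ C' (insert x S))

/-!
Choose for every agent a substitutable sub-preference and take a pairwise stable allocation `Y`
of the resulting substitutable profile. Condition (i) of a sub-preference carries individual
rationality of `Y` back to the original preferences, and condition (ii), applied at the
individually rational `Y`, turns a contract blocking `Y` under the original preferences into one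
blocking it under the sub-preferences, which cannot exist.
-/

section SubPref

variable {doc hos : X → A} {C C' : A → Finset X → Finset X} {Y : Finset X}

theorem IndRat.of_subPrefAt (hPref : ∀ a, SubPrefAt doc hos a (C' a) (C a))
    (hY : IndRat doc hos C' Y) : IndRat doc hos C Y :=
  fun a => (hPref a).1 Y (hY a)

theorem Blocks.of_subPrefAt (hPref : ∀ a, SubPrefAt doc hos a (C' a) (C a))
    (hY : IndRat doc hos C' Y) {x : X} (hx : Blocks doc hos C Y x) : Blocks doc hos C' Y x :=
  let ⟨hxY, hdoc, hhos⟩ := hx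
  ⟨hxY, (hPref (doc x)).2 Y x (hY (doc x)) hxY hdoc, (hPref (hos x)).2 Y x (hY (hos x)) hxY hhos⟩

theorem Stable.of_subPrefAt (hPref : ∀ a, SubPrefAt doc hos a (C' a) (C a))
    (hY : Stable doc hos C' Y) : Stable doc hos C Y :=
  ⟨hY.1.of_subPrefAt hPref, fun _ hx => hY.2 _ (hx.of_subPrefAt hPref hY.1)⟩

end SubPref

/-- If `P` is a pseudo-substitutable profile (every agent's preference admits a
substitutable sub-preference) and every substitutable profile admits a pairwise stable
allocation, then `S(P) ≠ ∅`. -/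
theorem stable_nonempty_of_pseudoSubstitutable
    (doc hos : X → A) (C : A → Finset X → Finset X)
    (hPseudo : ∀ a : A, ∃ C' : Finset X → Finset X,
        Substitutable C' ∧ SubPrefAt doc hos a C' (C a))
    (hExist : ∀ C' : A → Finset X → Finset X,
        (∀ a : A, Substitutable (C' a)) → ∃ Y : Finset X, Stable doc hos C' Y) :
    ∃ Y : Finset X, Stable doc hos C Y := by
  choose C' hSub hPref using hPseudo
  obtain ⟨Y, hY⟩ := hExist C' hSub
  exact ⟨Y, hY.of_subPrefAt hPref⟩
end

section
/- A choice function is substitutable (in the pairwise-removal sense) if and only if it satisfies the inclusion form: for all X' ⊆ X'', C(X'') ∩ X' ⊆ C(X'). -/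
variable {X : Type*} [DecidableEq X]

/-- Inclusion form of substitutability. -/
def SubstitutableIncl (C : Finset X → Finset X) : Prop :=
  ∀ S T : Finset X, S ⊆ T → C T ∩ S ⊆ C S

/-- Consistency of a choice function. -/
def Consistent (C : Finset X → Finset X) : Prop :=
  ∀ S T : Finset X, C S ⊆ T → T ⊆ S → C T = C S

/-!
Pairwise removal is the special case `S = T.erase x` of the inclusion form. Conversely, to pass
from `T` to `S ⊆ T`, remove the elements of `T \ S` one at a time: an element of `S` chosen from
`T` stays chosen after each removal.
-/

open Finset

theorem Substitutable.mem_sdiff_of_mem {C : Finset X → Finset X} (hC : Substitutable C)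
    {T D : Finset X} {y : X} (hDT : D ⊆ T) (hyT : y ∈ T) (hyD : y ∉ D) (hy : y ∈ C T) :
    y ∈ C (T \ D) := by
  induction D using Finset.induction_on with
  | empty => simpa using hy
  | insert a D haD ih =>
    have hya : a ≠ y := fun h => hyD (h ▸ mem_insert_self a D)
    have ha : a ∈ T \ D := mem_sdiff.2 ⟨hDT (mem_insert_self a D), haD⟩
    have hy' : y ∈ T \ D := mem_sdiff.2 ⟨hyT, fun h => hyD (mem_insert_of_mem h)⟩
    rw [sdiff_insert]
    exact hC _ a y ha hy' hya
      (ih ((subset_insert a D).trans hDT) fun h => hyD (mem_insert_of_mem h))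

theorem SubstitutableIncl.substitutable {C : Finset X → Finset X} (hC : SubstitutableIncl C) :
    Substitutable C := fun S x _ _ hx' hne hx'C =>
  hC (S.erase x) S (erase_subset x S) (mem_inter.2 ⟨hx'C, mem_erase.2 ⟨hne.symm, hx'⟩⟩)

theorem substitutable_iff_incl_general (C : Finset X → Finset X) :
    Substitutable C ↔ SubstitutableIncl C := by
  refine ⟨fun hC S T hST y hy => ?_, SubstitutableIncl.substitutable⟩
  obtain ⟨hyC, hyS⟩ := mem_inter.1 hy
  have hyD : y ∉ T \ S := fun h => (mem_sdiff.1 h).2 hyS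
  have := hC.mem_sdiff_of_mem sdiff_subset (hST hyS) hyD hyC
  rwa [Finset.sdiff_sdiff_eq_self hST] at this

/-- A choice function is substitutable in the pairwise-removal sense iff it satisfies
the inclusion form: for all `S ⊆ T`, `C T ∩ S ⊆ C S`. -/
theorem substitutable_iff_incl (C : Finset X → Finset X)
    (hchoice : ∀ S : Finset X, C S ⊆ S) (hcons : Consistent C) :
    Substitutable C ↔ SubstitutableIncl C :=
  substitutable_iff_incl_general C
end

section
/- A substitutable, consistent choice function satisfies path independence: C(X' ∪ X'') = C(C(X') ∪ X'') for all subsets X', X''. -/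
variable {X : Type*} [DecidableEq X]

/-! Substitutability, applied one removed element at a time, shows that whatever `C` chooses
from `S ∪ T` inside `S` is already chosen from `S`. Hence `C (S ∪ T) ⊆ C S ∪ T ⊆ S ∪ T`, and
consistency gives `C (C S ∪ T) = C (S ∪ T)`. -/

open Finset

theorem Substitutable.inter_subset_of_subset {C : Finset X → Finset X} (hsub : Substitutable C)
    {S T : Finset X} (hTS : T ⊆ S) : C S ∩ T ⊆ C T := by
  induction S using Finset.strongInduction with
  | H S ih =>
    obtain rfl | hne := eq_or_ne T S
    · exact inter_subset_left
    obtain ⟨x, hxS, hxT⟩ := exists_of_ssubset (ssubset_of_subset_of_ne hTS hne)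
    intro y hy
    obtain ⟨hyC, hyT⟩ := mem_inter.1 hy
    have hyC' : y ∈ C (S.erase x) :=
      hsub S x y hxS (hTS hyT) (fun h => hxT (h ▸ hyT)) hyC
    exact ih (S.erase x) (erase_ssubset hxS) (subset_erase.2 ⟨hTS, hxT⟩)
      (mem_inter.2 ⟨hyC', hyT⟩)

/-- A substitutable, consistent choice function satisfies path independence:
`C(X' ∪ X'') = C(C(X') ∪ X'')`. -/
theorem pathIndependent_of_substitutable (C : Finset X → Finset X)
    (hchoice : ∀ S : Finset X, C S ⊆ S)
    (hcons : Consistent C) (hsub : Substitutable C) :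
    ∀ S T : Finset X, C (S ∪ T) = C (C S ∪ T) := by
  intro S T
  have hkeep : C (S ∪ T) ∩ S ⊆ C S := hsub.inter_subset_of_subset subset_union_left
  have hlower : C (S ∪ T) ⊆ C S ∪ T := by
    intro x hx
    rcases mem_union.1 (hchoice _ hx) with hxS | hxT
    · exact mem_union_left _ (hkeep (mem_inter.2 ⟨hx, hxS⟩))
    · exact mem_union_right _ hxT
  exact (hcons _ _ hlower (union_subset_union (hchoice S) subset_rfl)).symm
end

section
/- Let P'_a ⊑ P_a with P'_a substitutable. Then P'_a is minimal: there is no preference P''_a with P''_a ⊑ P_a and A(P''_a) strictly contained in A(P'_a), where A(Q) denotes the collection of acceptable sets of Q. -/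
variable {X : Type*} [DecidableEq X]

def SubPref (C' C : Finset X → Finset X) : Prop :=
  (∀ S : Finset X, C' S = S → C S = S) ∧
  (∀ (S : Finset X) (x : X), C' S = S → x ∉ S → x ∈ C (insert x S) → x ∈ C' (insert x S))

/-- The collection of acceptable (fixed) sets of a choice function. -/
def AccSets (C : Finset X → Finset X) : Set (Finset X) := {S | C S = S}

/-! Substitutability of `C'` makes its acceptable sets closed under subsets, and a
sub-preference `C''` of `C` is acceptable on every set all of whose subsets are `C`-acceptable.
Since `A(C') ⊆ A(C)`, this gives `A(C') ⊆ A(C'')` for every `C'' ⊑ C`, so `A(C'') ⊂ A(C')` is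
impossible. -/

namespace Substitutable

variable {C : Finset X → Finset X}

theorem erase_mem_accSets (hC : ∀ S, C S ⊆ S) (hsubst : Substitutable C) {S : Finset X}
    (hS : S ∈ AccSets C) (y : X) : S.erase y ∈ AccSets C := by
  refine (hC _).antisymm fun z hz => ?_
  obtain ⟨hzy, hzS⟩ := Finset.mem_erase.1 hz
  by_cases hyS : y ∈ S
  · exact hsubst S y z hyS hzS (Ne.symm hzy) (hS.symm ▸ hzS)
  · rwa [Finset.erase_eq_of_notMem hyS, hS]

theorem mem_accSets_of_subset (hC : ∀ S, C S ⊆ S) (hsubst : Substitutable C) {S U : Finset X}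
    (hS : S ∈ AccSets C) (hU : U ⊆ S) : U ∈ AccSets C := by
  have hsdiff : ∀ D : Finset X, S \ D ∈ AccSets C := by
    intro D
    induction D using Finset.induction_on with
    | empty => rwa [Finset.sdiff_empty]
    | insert a D _ ih =>
      rw [Finset.sdiff_insert]
      exact hsubst.erase_mem_accSets hC ih a
  simpa only [Finset.sdiff_sdiff_eq_self hU] using hsdiff (S \ U)

end Substitutable

/-- If `S` were not `C''`-acceptable, pick `x ∈ S \ C'' S`; then `C''` must choose `x` from the
`C`-acceptable set `insert x (C'' S)`, while consistency forces it to choose `C'' S` there. -/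
theorem SubPref.mem_accSets_of_forall_subset {C C'' : Finset X → Finset X}
    (hsub : SubPref C'' C) (hC'' : ∀ S, C'' S ⊆ S) (hC''c : Consistent C'') {S : Finset X}
    (hS : ∀ U ⊆ S, U ∈ AccSets C) : S ∈ AccSets C'' := by
  by_contra hne
  set T := C'' S
  obtain ⟨x, hxS, hxT⟩ := Finset.exists_of_ssubset ((hC'' S).ssubset_of_ne hne)
  have hT : C'' T = T := hC''c S T subset_rfl (hC'' S)
  have hxTS : insert x T ⊆ S := Finset.insert_subset hxS (hC'' S)
  have hxC : x ∈ C (insert x T) := by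
    rw [hS _ hxTS]
    exact Finset.mem_insert_self x T
  have hxC'' : x ∈ C'' (insert x T) := hsub.2 T x hT hxT hxC
  rw [hC''c S (insert x T) (Finset.subset_insert x T) hxTS] at hxC''
  exact hxT hxC''

theorem substitutable_subPref_minimal_general
    (C C' : Finset X → Finset X)
    (hC' : ∀ S : Finset X, C' S ⊆ S)
    (hsub : SubPref C' C) (hsubst : Substitutable C') :
    ¬ ∃ C'' : Finset X → Finset X,
        (∀ S : Finset X, C'' S ⊆ S) ∧ Consistent C'' ∧ SubPref C'' C ∧
        AccSets C'' ⊂ AccSets C' := by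
  rintro ⟨C'', hC'', hC''c, hC''sub, hss⟩
  refine hss.not_subset fun S hS => hC''sub.mem_accSets_of_forall_subset hC'' hC''c ?_
  exact fun U hU => hsub.1 U (hsubst.mem_accSets_of_subset hC' hS hU)

/-- If `C' ⊑ C` and `C'` is substitutable, then `C'` is minimal: no sub-preference `C''`
of `C` has a collection of acceptable sets strictly contained in that of `C'`. -/
theorem substitutable_subPref_minimal
    (C C' : Finset X → Finset X)
    (hC : ∀ S : Finset X, C S ⊆ S) (hCc : Consistent C)
    (hC' : ∀ S : Finset X, C' S ⊆ S) (hC'c : Consistent C')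
    (hsub : SubPref C' C) (hsubst : Substitutable C') :
    ¬ ∃ C'' : Finset X → Finset X,
        (∀ S : Finset X, C'' S ⊆ S) ∧ Consistent C'' ∧ SubPref C'' C ∧
        AccSets C'' ⊂ AccSets C' :=
  substitutable_subPref_minimal_general C C' hC' hsub hsubst
end

section
/- If P'_a and P''_a are both substitutable sub-preferences of the same preference P_a, then their collections of acceptable sets coincide: A(P'_a) = A(P''_a). -/
variable {X : Type*} [DecidableEq X]

/-!
By induction on `S`, every set acceptable for `C'` is acceptable for `C''`. If `C' S = S` and
`x ∈ S`, substitutability of `C'` makes `S.erase x` acceptable for `C'`, hence for `C''` by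
induction. Since `C'` is a sub-preference of `C`, `S` is acceptable for `C`, so `C` chooses `x`
from `insert x (S.erase x) = S`; the second clause of `C'' ⊑ C` then forces `x ∈ C'' S`.
-/

theorem Substitutable.erase_mem_accSets_s8 {D : Finset X → Finset X} (hD : Substitutable D)
    (hDS : ∀ S, D S ⊆ S) {S : Finset X} (hS : S ∈ AccSets D) (x : X) (hx : x ∈ S) :
    S.erase x ∈ AccSets D := by
  refine (hDS _).antisymm fun y hy => ?_
  have hyS : y ∈ S := Finset.mem_of_mem_erase hy
  exact hD S x y hx hyS (Finset.ne_of_mem_erase hy).symm (by rwa [hS])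

theorem SubPref.mem_of_erase_mem_accSets {C D D' : Finset X → Finset X} (hD : SubPref D C)
    (hD' : SubPref D' C) {S : Finset X} (hS : S ∈ AccSets D) {x : X} (hx : x ∈ S)
    (herase : S.erase x ∈ AccSets D') : x ∈ D' S := by
  have hCS : C S = S := hD.1 S hS
  have hxC : x ∈ C (insert x (S.erase x)) := by rwa [Finset.insert_erase hx, hCS]
  simpa only [Finset.insert_erase hx] using
    hD'.2 (S.erase x) x herase (Finset.notMem_erase x S) hxC

theorem accSets_subset_of_substitutable_subPref {C D D' : Finset X → Finset X}
    (hDS : ∀ S, D S ⊆ S) (hD'S : ∀ S, D' S ⊆ S) (hD : SubPref D C) (hsubst : Substitutable D)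
    (hD' : SubPref D' C) : AccSets D ⊆ AccSets D' := by
  intro S
  induction S using Finset.strongInduction with
  | _ S ih =>
    intro hS
    refine (hD'S S).antisymm fun x hx => ?_
    have herase : S.erase x ∈ AccSets D' :=
      ih _ (Finset.erase_ssubset hx) (hsubst.erase_mem_accSets_s8 hDS hS x hx)
    exact hD.mem_of_erase_mem_accSets hD' hS hx herase

theorem acc_eq_of_substitutable_subPrefs_general
    (C C' C'' : Finset X → Finset X)
    (hC' : ∀ S : Finset X, C' S ⊆ S)
    (hC'' : ∀ S : Finset X, C'' S ⊆ S)
    (hsub' : SubPref C' C) (hsubst' : Substitutable C')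
    (hsub'' : SubPref C'' C) (hsubst'' : Substitutable C'') :
    AccSets C' = AccSets C'' :=
  (accSets_subset_of_substitutable_subPref hC' hC'' hsub' hsubst' hsub'').antisymm
    (accSets_subset_of_substitutable_subPref hC'' hC' hsub'' hsubst'' hsub')

/-- Two substitutable sub-preferences of the same preference have the same collection
of acceptable sets. -/
theorem acc_eq_of_substitutable_subPrefs
    (C C' C'' : Finset X → Finset X)
    (hC : ∀ S : Finset X, C S ⊆ S) (hCc : Consistent C)
    (hC' : ∀ S : Finset X, C' S ⊆ S) (hC'c : Consistent C')
    (hC'' : ∀ S : Finset X, C'' S ⊆ S) (hC''c : Consistent C'')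
    (hsub' : SubPref C' C) (hsubst' : Substitutable C')
    (hsub'' : SubPref C'' C) (hsubst'' : Substitutable C'') :
    AccSets C' = AccSets C'' :=
  acc_eq_of_substitutable_subPrefs_general C C' C'' hC' hC'' hsub' hsubst' hsub'' hsubst''
end

section
/- If P'_a and P''_a are both substitutable sub-preferences of the same preference P_a, then they induce the same Blair comparisons on acceptable sets: for all X1, X2 ∈ A(P'_a), if X1 = C^{P'}_a(X1 ∪ X2) then X1 = C^{P''}_a(X1 ∪ X2). -/
/-!
If `C₁, C₂` are substitutable sub-preferences of `C` with the same acceptable sets, they accept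
the same new elements: for acceptable `A`, `x ∉ A` and `x ∈ C₂ (A ∪ {x})` force
`x ∈ C₁ (A ∪ {x})`. Otherwise `C₁ (A ∪ {x}) = A = C (A ∪ {x})`, while `T = C₂ (A ∪ {x})`
contains `x`, so by substitutability `C₁` accepts some `z ∉ T` added to `T`, which `C₂` (and
hence `C`) rejects. Since `C` rejects `z`, it is not in `A`, so `T ∪ {z}` is strictly smaller
than `A ∪ {x}`, and induction on the size with the roles of `C₁, C₂` swapped gives a
contradiction.

Hence if `C''` chose more than `X1` from `X1 ∪ X2`, some `z` it adds to `X1` would also be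
accepted by `C'`, contradicting `C' (X1 ∪ X2) = X1`.
-/


variable {X : Type*} [DecidableEq X]

open Finset

namespace Substitutable

variable {C : Finset X → Finset X}

theorem mem_apply_union (hs : Substitutable C) {U : Finset X} {x : X} (hx : x ∈ U) :
    ∀ D : Finset X, x ∈ C (U ∪ D) → x ∈ C U := by
  intro D
  induction D using Finset.induction_on with
  | empty => simp
  | insert y D hyD ih =>
    intro hxC
    by_cases hyU : y ∈ U
    · rw [union_insert, insert_eq_of_mem (mem_union_left D hyU)] at hxC
      exact ih hxC
    · have hyx : y ≠ x := by rintro rfl; exact hyU hx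
      have hxC' := hs _ y x (by simp) (mem_union_left _ hx) hyx hxC
      rw [union_insert, erase_insert (by simp [hyU, hyD])] at hxC'
      exact ih hxC'

theorem mem_apply_of_subset (hs : Substitutable C) {S U : Finset X} (hUS : U ⊆ S) {x : X}
    (hx : x ∈ U) (hxC : x ∈ C S) : x ∈ C U :=
  hs.mem_apply_union hx (S \ U) (by rwa [union_sdiff_of_subset hUS])

end Substitutable

namespace Consistent

variable {C : Finset X → Finset X}

omit [DecidableEq X] in
theorem apply_eq_of_subset (hc : Consistent C) {A S : Finset X} (hA : C A = A)
    (hCS : C S ⊆ A) (hAS : A ⊆ S) : C S = A :=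
  (hc S A hCS hAS).symm.trans hA

omit [DecidableEq X] in
theorem apply_idem (hc : Consistent C) (hC : ∀ S, C S ⊆ S) (S : Finset X) :
    C (C S) = C S :=
  hc S (C S) subset_rfl (hC S)

theorem apply_insert_eq_of_notMem (hc : Consistent C) (hC : ∀ S, C S ⊆ S) {A : Finset X}
    (hA : C A = A) {x : X} (hx : x ∉ C (insert x A)) : C (insert x A) = A :=
  hc.apply_eq_of_subset hA
    (fun z hz => (mem_insert.mp (hC _ hz)).resolve_left (by rintro rfl; exact hx hz))
    (subset_insert x A)

end Consistent

theorem exists_mem_apply_insert_of_apply_ne {C : Finset X → Finset X} (hC : ∀ S, C S ⊆ S)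
    (hc : Consistent C) (hs : Substitutable C) {S T : Finset X} (hT : C T = T) (hTS : T ⊆ S)
    (hne : C S ≠ T) : ∃ z ∈ S, z ∉ T ∧ z ∈ C (insert z T) := by
  obtain ⟨z, hzC, hzT⟩ := not_subset.mp fun hsub => hne (hc.apply_eq_of_subset hT hsub hTS)
  have hzS := hC S hzC
  exact ⟨z, hzS, hzT,
    hs.mem_apply_of_subset (insert_subset hzS hTS) (mem_insert_self z T) hzC⟩

structure IsSubstitutableSubPref (C C' : Finset X → Finset X) : Prop where
  subset : ∀ S, C' S ⊆ S
  consistent : Consistent C'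
  substitutable : Substitutable C'
  subPref : SubPref C' C

theorem IsSubstitutableSubPref.mem_apply_insert_of_mem {C C₁ C₂ : Finset X → Finset X}
    (hC : ∀ S, C S ⊆ S) (hc : Consistent C) (h₁ : IsSubstitutableSubPref C C₁)
    (h₂ : IsSubstitutableSubPref C C₂) (hacc : AccSets C₁ = AccSets C₂) {A : Finset X}
    {x : X} (hA : C₁ A = A) (hxA : x ∉ A) (hx₂ : x ∈ C₂ (insert x A)) :
    x ∈ C₁ (insert x A) := by
  induction hn : (insert x A).card using Nat.strong_induction_on generalizing C₁ C₂ A x with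
  | _ n ih =>
  by_contra hx₁
  set V := insert x A
  have hC₁V : C₁ V = A := h₁.consistent.apply_insert_eq_of_notMem h₁.subset hA hx₁
  have hCV : C V = A :=
    hc.apply_insert_eq_of_notMem hC (h₁.subPref.1 A hA) fun h => hx₁ (h₁.subPref.2 A x hA hxA h)
  set T := C₂ V
  have hT₂ : C₂ T = T := h₂.consistent.apply_idem h₂.subset V
  have hT₁ : C₁ T = T := (Set.ext_iff.mp hacc T).mpr hT₂
  obtain ⟨z, hzV, hzT, hz₁⟩ := exists_mem_apply_insert_of_apply_ne h₁.subset h₁.consistent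
    h₁.substitutable hT₁ (h₂.subset V) fun h => hxA (hC₁V ▸ h ▸ hx₂)
  have hzTV : insert z T ⊆ V := insert_subset hzV (h₂.subset V)
  have hz₂ : z ∉ C₂ (insert z T) := by
    rwa [h₂.consistent V _ (subset_insert z T) hzTV]
  have hlt : (insert z T).card < n := by
    refine hn ▸ card_lt_card (hzTV.ssubset_of_ne fun heq => ?_)
    have hzC : z ∉ C (insert z T) := fun h => hz₂ (h₂.subPref.2 T z hT₂ hzT h)
    rw [heq] at hz₁ hzC
    exact hzC (hCV ▸ hC₁V ▸ hz₁)
  exact hz₂ (ih _ hlt h₂ h₁ hacc.symm hT₂ hzT hz₁ rfl)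

/-- Two substitutable sub-preferences of the same preference induce the same Blair
comparisons on acceptable sets: for `X1, X2 ∈ A(P')`, if `X1 = C'(X1 ∪ X2)` then
`X1 = C''(X1 ∪ X2)`. (We assume, as previously established, that `A(P') = A(P'')`.) -/
theorem blair_eq_of_substitutable_subPrefs
    (C C' C'' : Finset X → Finset X)
    (hC : ∀ S : Finset X, C S ⊆ S) (hCc : Consistent C)
    (hC' : ∀ S : Finset X, C' S ⊆ S) (hC'c : Consistent C')
    (hC'' : ∀ S : Finset X, C'' S ⊆ S) (hC''c : Consistent C'')
    (hsub' : SubPref C' C) (hsubst' : Substitutable C')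
    (hsub'' : SubPref C'' C) (hsubst'' : Substitutable C'')
    (hacc : AccSets C' = AccSets C'') :
    ∀ X1 X2 : Finset X, X1 ∈ AccSets C' → X2 ∈ AccSets C' →
      C' (X1 ∪ X2) = X1 → C'' (X1 ∪ X2) = X1 := by
  intro X1 X2 hX1 _ hX12
  have hX1'' : C'' X1 = X1 := (Set.ext_iff.mp hacc X1).mp hX1
  by_contra hne
  obtain ⟨z, hz, hzX1, hz''⟩ :=
    exists_mem_apply_insert_of_apply_ne hC'' hC''c hsubst'' hX1'' subset_union_left hne
  have hz' : z ∈ C' (insert z X1) :=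
    IsSubstitutableSubPref.mem_apply_insert_of_mem hC hCc ⟨hC', hC'c, hsubst', hsub'⟩
      ⟨hC'', hC''c, hsubst'', hsub''⟩ hacc hX1 hzX1 hz''
  have hC'z : C' (insert z X1) = X1 :=
    (hC'c _ _ (by rw [hX12]; exact subset_insert z X1)
      (insert_subset hz subset_union_left)).trans hX12
  exact hzX1 (hC'z ▸ hz')
end
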